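/- For every integer p ≥ 1 and every integer m ≥ 2, the lexicographic product G of the path P_m with the complete graph K_p (the graph whose vertex set is partitioned into m levels, each level inducing K_p, with every edge present between consecutive levels) satisfies σ(G) ≤ 4p and |E(G)| = (3p−1)·|V(G)|/2 − p². Consequently, for all p ≥ 1 there are infinitely many graphs G with σ(G) ≤ 4p and |E(G)| ≥ (3σ(G)−4)·|V(G)|/8 − σ(G)²/9. -/

import Mathlib

open SimpleGraph

/-- `v 0, v 1, …, v (n-1)` is a walk in `G` (consecutive vertices are adjacent). -/
def IsWalkSeq {V : Type} (G : SimpleGraph V) (n : ℕ) (v : ℕ → V) : Prop :=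
  ∀ i : ℕ, i + 1 < n → G.Adj (v i) (v (i + 1))

/-- `v 0, …, v (n-1)` is a path in `G` (a walk with pairwise distinct vertices). -/
def IsPathSeq {V : Type} (G : SimpleGraph V) (n : ℕ) (v : ℕ → V) : Prop :=
  IsWalkSeq G n v ∧ ∀ i < n, ∀ j < n, v i = v j → i = j

/-- The walk `v 0, …, v (2t-1)` is repetitively coloured by `f`. -/
def RepetitivelyColoured {V C : Type} (f : V → C) (t : ℕ) (v : ℕ → V) : Prop :=
  ∀ i < t, f (v i) = f (v (t + i))

/-- The walk `v 0, …, v (2t-1)` is boring. -/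
def BoringWalk {V : Type} (t : ℕ) (v : ℕ → V) : Prop :=
  ∀ i < t, v i = v (t + i)

/-- A colouring is nonrepetitive on walks: every repetitively coloured walk is boring. -/
def WalkNonrepetitive {V C : Type} (G : SimpleGraph V) (f : V → C) : Prop :=
  ∀ (t : ℕ) (v : ℕ → V), IsWalkSeq G (2 * t) v → RepetitivelyColoured f t v → BoringWalk t v

/-- A colouring is nonrepetitive on paths: no (nonempty) path is repetitively coloured. -/
def PathNonrepetitive {V C : Type} (G : SimpleGraph V) (f : V → C) : Prop :=
  ∀ (t : ℕ) (v : ℕ → V), 0 < t → IsPathSeq G (2 * t) v → ¬ RepetitivelyColoured f t v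

/-- A distance-2 colouring: distinct vertices at distance at most 2 get distinct colours. -/
def Distance2Coloring {V C : Type} (G : SimpleGraph V) (f : V → C) : Prop :=
  ∀ u w : V, u ≠ w → (G.Adj u w ∨ ∃ x, G.Adj u x ∧ G.Adj x w) → f u ≠ f w

/-- σ(G): the minimum number of colours in a walk-nonrepetitive colouring of `G`. -/
noncomputable def sigmaNR {V : Type} (G : SimpleGraph V) : ℕ :=
  sInf {k | ∃ f : V → Fin k, WalkNonrepetitive G f}

/-- π(G): the minimum number of colours in a path-nonrepetitive colouring of `G`. -/
noncomputable def piNR {V : Type} (G : SimpleGraph V) : ℕ :=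
  sInf {k | ∃ f : V → Fin k, PathNonrepetitive G f}

/-- The square graph `G²`: distinct vertices at distance at most 2 are adjacent. -/
def squareGraph {V : Type} (G : SimpleGraph V) : SimpleGraph V where
  Adj u w := u ≠ w ∧ (G.Adj u w ∨ ∃ x, G.Adj u x ∧ G.Adj x w)
  symm := by
    constructor
    rintro u w ⟨h1, h2⟩
    refine ⟨h1.symm, ?_⟩
    rcases h2 with h | ⟨x, hx1, hx2⟩
    · exact Or.inl h.symm
    · exact Or.inr ⟨x, hx2.symm, hx1.symm⟩
  loopless := by constructor; rintro u ⟨h, -⟩; exact h rfl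

/-- A levelling of `G`: levels of adjacent vertices differ by at most 1. -/
def IsLevelling {V : Type} (G : SimpleGraph V) (lam : V → ℤ) : Prop :=
  ∀ u w : V, G.Adj u w → |lam u - lam w| ≤ 1

/-- A levelling is shadow-complete if, for every `k`, the `k`-shadow of every connected
component of `G_{λ>k}` induces a clique: if `u` and `w` are on level `k` and each has a
neighbour in the same component of `G_{λ>k}`, then `u = w` or `u` and `w` are adjacent. -/
def ShadowComplete {V : Type} (G : SimpleGraph V) (lam : V → ℤ) : Prop :=
  ∀ (k : ℤ) (u w : V), lam u = k → lam w = k →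
    (∃ (x y : {v : V | k < lam v}), G.Adj u x.1 ∧ G.Adj w y.1 ∧
      (G.induce {v : V | k < lam v}).Reachable x y) →
    u = w ∨ G.Adj u w

/-- The number of distinct vertices of the walk `v 0, …, v (n-1)`. -/
def walkOrder {V : Type} [DecidableEq V] (n : ℕ) (v : ℕ → V) : ℕ :=
  ((Finset.range n).image v).card

/-- `G` has a tree-partition in which every bag has at most `ℓ` vertices:
the vertices are mapped to the nodes of a forest so that the bags (preimages)
have at most `ℓ` vertices each, and adjacent vertices of `G` lie in the same bag
or in bags corresponding to adjacent nodes of the forest. -/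
def HasTreePartition {V : Type} (G : SimpleGraph V) (ℓ : ℕ) : Prop :=
  ∃ (B : Type) (F : SimpleGraph B) (b : V → B),
    F.IsAcyclic ∧
    (∀ u w : V, G.Adj u w → b u = b w ∨ F.Adj (b u) (b w)) ∧
    (∀ x : B, {v : V | b v = x}.ncard ≤ ℓ)

/-- The lexicographic product of the path `P_m` with the complete graph `K_p`: the vertex set is
`Fin m × Fin p`, and `(i, a)` is adjacent to `(j, b)` iff `|i - j| = 1`, or `i = j` and `a ≠ b`. -/
def lexPathComplete (m p : ℕ) : SimpleGraph (Fin m × Fin p) :=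
  SimpleGraph.fromRel (fun x y =>
    ((x.1 : ℕ) + 1 = (y.1 : ℕ)) ∨ (x.1 = y.1 ∧ x.2 ≠ y.2))

def tm (n : ℕ) : Bool :=
  if n = 0 then false
  else if n % 2 = 0 then tm (n / 2) else ! tm (n / 2)
decreasing_by all_goals omega

lemma tm_even (a : ℕ) : tm (2*a) = tm a := by
  rcases Nat.eq_zero_or_pos a with rfl | h
  · rfl
  · rw [tm, if_neg (by omega), if_pos (by omega), (by omega : 2*a/2 = a)]

lemma tm_odd (a : ℕ) : tm (2*a+1) = ! tm a := by
  rw [tm, if_neg (by omega), if_neg (by omega), (by omega : (2*a+1)/2 = a)]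

lemma no3 (n : ℕ) (h1 : tm n = tm (n+1)) (h2 : tm (n+1) = tm (n+2)) : False := by
  rcases Nat.even_or_odd n with ⟨a, ha⟩ | ⟨a, ha⟩
  · subst ha
    rw [(by ring : a + a = 2*a), tm_even, (by ring : 2*a+1 = 2*a+1), tm_odd] at h1
    cases tm a <;> simp_all
  · subst ha
    rw [(by ring : 2*a+1+1 = 2*(a+1)), (by ring : 2*a+1+2 = 2*(a+1)+1), tm_even, tm_odd] at h2
    cases tm (a+1) <;> simp_all

theorem tm_overlap : ∀ k, 1 ≤ k → ∀ m, (∀ i, i ≤ k → tm (m + i + k) = tm (m + i)) → False := by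
  intro k
  induction k using Nat.strong_induction_on with
  | _ k IH =>
  intro hk m H
  have Hx : ∀ x, m ≤ x → x ≤ m + k → tm (x + k) = tm x := by
    intro x h1 h2
    have := H (x - m) (by omega)
    rwa [show m + (x - m) = x by omega] at this
  rcases Nat.even_or_odd k with ⟨k', hk'⟩ | hko
  · -- k = 2k'
    have hk2 : k = 2 * k' := by omega
    subst hk2
    have H' : ∀ j, j ≤ k' → tm (m/2 + j + k') = tm (m/2 + j) := by
      intro j hj
      set x := m/2 + j with hx
      by_cases h2 : m ≤ 2*x
      · have e := Hx (2*x) h2 (by omega)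
        rwa [(by ring : 2*x + 2*k' = 2*(x+k')), tm_even, tm_even] at e
      · have h3 : 2*x + 1 = m := by omega
        have e := Hx (2*x+1) (by omega) (by omega)
        rw [(by ring : 2*x + 1 + 2*k' = 2*(x+k')+1), tm_odd, tm_odd] at e
        exact Bool.not_inj e
    exact IH k' (by omega) (by omega) (m/2) H'
  · -- k odd
    obtain ⟨c, hc⟩ := hko
    rcases (by omega : k = 1 ∨ k = 3 ∨ 5 ≤ k) with h1 | h3 | h5
    · subst h1
      have e1 := H 0 (by omega); have e2 := H 1 (by omega)
      simp only [Nat.add_zero] at e1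
      exact no3 m e1.symm (by rw [show m+2 = m+1+1 by ring] at e2; exact e2.symm)
    · -- k = 3
      subst h3
      set a := (m+1)/2 with ha
      have h2a : 2*a = m ∨ 2*a = m+1 := by omega
      have e1 := Hx (2*a) (by omega) (by omega)
      have e2 := Hx (2*a+1) (by omega) (by omega)
      have e3 := Hx (2*a+2) (by omega) (by omega)
      rw [(by ring : 2*a+3 = 2*(a+1)+1), tm_even, tm_odd] at e1
      rw [(by ring : 2*a+1+3 = 2*(a+2)), tm_odd, tm_even] at e2
      rw [(by ring : 2*a+2+3 = 2*(a+2)+1), (by ring : 2*a+2 = 2*(a+1)), tm_odd, tm_even] at e3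
      cases h : tm a <;> cases h' : tm (a+1) <;> cases h'' : tm (a+2) <;> simp_all
    · -- k ≥ 5 odd
      set a := (m+1)/2 with ha
      have key : ∀ j, m ≤ 2*j → 2*j+1 ≤ m + k → tm (j + (k-1)/2) = tm (j + (k-1)/2 + 1) := by
        intro j hj1 hj2
        have e := Hx (2*j) hj1 (by omega)
        have f := Hx (2*j+1) (by omega) (by omega)
        set l := j + (k-1)/2 with hl
        rw [(by omega : 2*j + k = 2*l+1), tm_odd, tm_even] at e
        rw [(by omega : 2*j+1+k = 2*(l+1)), tm_even, tm_odd] at f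
        cases h : tm l <;> cases h' : tm (l+1) <;> simp_all
      have e1 := key a (by omega) (by omega)
      have e2 := key (a+1) (by omega) (by omega)
      rw [show a+1+(k-1)/2 = a + (k-1)/2 + 1 by omega] at e2
      exact no3 _ e1 e2


def b2 (b : Bool) : ℕ := if b then 1 else 0

def uu (l : ℕ) : ℕ := (b2 (tm (l+1)) + 3 - b2 (tm l)) % 3

def cw (n : ℕ) : ℕ := if n % 3 = 0 then 3 else uu (n - n/3 - 1)

lemma uu_lt (l : ℕ) : uu l < 3 := Nat.mod_lt _ (by norm_num)

lemma uu_ne_succ (l : ℕ) : uu l ≠ uu (l+1) := by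
  intro h
  unfold uu at h
  cases h1 : tm l <;> cases h2 : tm (l+1) <;> cases h3 : tm (l+2) <;>
    simp [h1, h2, h3, b2, show l+1+1 = l+2 from rfl] at h <;>
    exact no3 l (by rw [h1, h2]) (by rw [h2, h3])
lemma uu_inj (l l' : ℕ) (h : uu l = uu l') :
    (b2 (tm (l+1)) : ℤ) - b2 (tm l) = (b2 (tm (l'+1)) : ℤ) - b2 (tm l') := by
  unfold uu at h
  cases h1 : tm l <;> cases h2 : tm (l+1) <;> cases h1' : tm l' <;> cases h2' : tm (l'+1) <;>
    simp [h1, h2, h1', h2', b2] at h ⊢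

lemma cw_le (n : ℕ) : cw n ≤ 3 := by
  unfold cw; split
  · exact le_refl 3
  · exact le_of_lt (lt_of_lt_of_le (uu_lt _) (by norm_num))

lemma cw_nl (l : ℕ) : cw (l + l/2 + 1) = uu l := by
  have h1 : (l + l/2 + 1) % 3 ≠ 0 := by omega
  have h2 : l + l/2 + 1 - (l + l/2 + 1)/3 - 1 = l := by omega
  rw [cw, if_neg h1, h2]

lemma cw_ne1 (n : ℕ) : cw n ≠ cw (n+1) := by
  rcases (by omega : n % 3 = 0 ∨ n % 3 = 1 ∨ n % 3 = 2) with h | h | h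
  · rw [cw, if_pos h, cw, if_neg (by omega)]
    exact fun e => absurd e.symm (Nat.ne_of_lt (uu_lt _))
  · rw [cw, if_neg (by omega), cw, if_neg (by omega),
      (by omega : n + 1 - (n+1)/3 - 1 = (n - n/3 - 1) + 1)]
    exact uu_ne_succ _
  · rw [cw, if_neg (by omega), cw, if_pos (by omega)]
    exact Nat.ne_of_lt (lt_of_lt_of_le (uu_lt _) (by norm_num))

lemma cw_ne2 (n : ℕ) : cw n ≠ cw (n+2) := by
  rcases (by omega : n % 3 = 0 ∨ n % 3 = 1 ∨ n % 3 = 2) with h | h | h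
  · rw [cw, if_pos h, cw, if_neg (by omega)]
    exact fun e => absurd e.symm (Nat.ne_of_lt (uu_lt _))
  · rw [cw, if_neg (by omega), cw, if_pos (by omega)]
    exact Nat.ne_of_lt (lt_of_lt_of_le (uu_lt _) (by norm_num))
  · rw [cw, if_neg (by omega), cw, if_neg (by omega),
      (by omega : n + 2 - (n+2)/3 - 1 = (n - n/3 - 1) + 1)]
    exact uu_ne_succ _

lemma cw_d2 (x y : ℕ) (h : cw x = cw y) : x = y ∨ x + 3 ≤ y ∨ y + 3 ≤ x := by
  rcases (by omega : x = y ∨ y = x + 1 ∨ y = x + 2 ∨ x = y + 1 ∨ x = y + 2 ∨ x + 3 ≤ y ∨ y + 3 ≤ x)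
    with h' | h' | h' | h' | h' | h' | h'
  · exact Or.inl h'
  · exact absurd (h' ▸ h) (cw_ne1 x)
  · exact absurd (h' ▸ h) (cw_ne2 x)
  · exact absurd (h' ▸ h).symm (cw_ne1 y)
  · exact absurd (h' ▸ h).symm (cw_ne2 y)
  · exact Or.inr (Or.inl h')
  · exact Or.inr (Or.inr h')

lemma tmZ_cases (x : ℕ) : (b2 (tm x) : ℤ) = 0 ∨ (b2 (tm x) : ℤ) = 1 := by
  cases tm x <;> simp [b2]

lemma cw_sf : ∀ k a, 1 ≤ k → (∀ j, j < k → cw (a + j) = cw (a + k + j)) → False := by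
  intro k a hk H
  by_cases h3 : k % 3 = 0
  · -- k = 3k'
    obtain ⟨k', rfl⟩ : ∃ k', k = 3 * k' := ⟨k/3, by omega⟩
    have hk' : 1 ≤ k' := by omega
    set l₀ := (2*a)/3 with hl₀
    -- uu matches on the window
    have huu : ∀ s, s < 2*k' → uu (l₀ + s) = uu (l₀ + s + 2*k') := by
      intro s hs
      set l := l₀ + s with hl
      have key1 : a ≤ l + l/2 + 1 := by omega
      have key2 : l + l/2 + 1 < a + 3*k' := by omega
      have e := H (l + l/2 + 1 - a) (by omega)
      rw [show a + (l + l/2 + 1 - a) = l + l/2 + 1 by omega,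
          show a + 3*k' + (l + l/2 + 1 - a) = (l + 2*k') + (l + 2*k')/2 + 1 by omega,
          cw_nl, cw_nl] at e
      exact e
    -- telescoping
    set g : ℕ → ℤ := fun s => (b2 (tm (l₀ + s + 2*k')) : ℤ) - b2 (tm (l₀ + s)) with hg
    have hstep : ∀ s, s < 2*k' → g (s+1) = g s := by
      intro s hs
      have := uu_inj _ _ (huu s hs)
      simp only [hg]
      rw [show l₀ + (s+1) + 2*k' = (l₀ + s + 2*k') + 1 by ring,
          show l₀ + (s+1) = (l₀ + s) + 1 by ring]
      linarith
    have hconst : ∀ s, s ≤ 2*k' → g s = g 0 := by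
      intro s hs
      induction s with
      | zero => rfl
      | succ n ih => rw [hstep n (by omega)]; exact ih (by omega)
    have b2inj : ∀ x y : Bool, (b2 x : ℤ) = b2 y → x = y := by
      intro x y; cases x <;> cases y <;> simp [b2]
    have g0cases : g 0 = 0 ∨ g 0 = 1 ∨ g 0 = -1 := by
      simp only [hg]
      rcases tmZ_cases (l₀ + 0 + 2*k') with h1 | h1 <;> rcases tmZ_cases (l₀ + 0) with h0 | h0 <;>
        rw [h1, h0] <;> norm_num
    rcases g0cases with h0 | h0 | h0
    · -- overlap
      apply tm_overlap (2*k') (by omega) l₀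
      intro i hi
      have := hconst i hi
      rw [h0] at this
      simp only [hg] at this
      exact b2inj _ _ (by linarith)
    · -- all false
      have hf : ∀ s, s ≤ 2*k' → tm (l₀ + s) = false := by
        intro s hs
        have := hconst s hs
        rw [h0] at this
        simp only [hg] at this
        rcases tmZ_cases (l₀ + s + 2*k') with h1 | h1 <;> rcases tmZ_cases (l₀ + s) with h2 | h2 <;>
          rw [h1, h2] at this <;> first
          | omega
          | (revert h2; cases hb : tm (l₀ + s) <;> simp [b2])
      have e0 := hf 0 (by omega); have e1 := hf 1 (by omega); have e2 := hf 2 (by omega)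
      rw [show l₀ + 0 = l₀ from rfl] at e0
      exact no3 l₀ (by rw [e0, e1]) (by rw [e1, e2])
    · -- all true
      have hf : ∀ s, s ≤ 2*k' → tm (l₀ + s) = true := by
        intro s hs
        have := hconst s hs
        rw [h0] at this
        simp only [hg] at this
        rcases tmZ_cases (l₀ + s + 2*k') with h1 | h1 <;> rcases tmZ_cases (l₀ + s) with h2 | h2 <;>
          rw [h1, h2] at this <;> first
          | omega
          | (revert h2; cases hb : tm (l₀ + s) <;> simp [b2])
      have e0 := hf 0 (by omega); have e1 := hf 1 (by omega); have e2 := hf 2 (by omega)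
      rw [show l₀ + 0 = l₀ from rfl] at e0
      exact no3 l₀ (by rw [e0, e1]) (by rw [e1, e2])
  · -- k % 3 ≠ 0
    rcases (by omega : k = 1 ∨ k = 2 ∨ 3 ≤ k) with h1 | h2 | hge
    · subst h1
      have := H 0 (by omega)
      rw [show a + 0 = a from rfl, show a + 1 + 0 = a + 1 from rfl] at this
      exact cw_ne1 a this
    · subst h2
      have := H 0 (by omega)
      rw [show a + 0 = a from rfl, show a + 2 + 0 = a + 2 from rfl] at this
      exact cw_ne2 a this
    · set j := (3 - a % 3) % 3 with hj
      have hjk : j < k := by omega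
      have e := H j hjk
      rw [cw, if_pos (by omega), cw, if_neg (by omega)] at e
      exact absurd e.symm (Nat.ne_of_lt (uu_lt _))


lemma delred (t : ℕ) (u : ℕ → ℕ) (i : ℕ) (hi : i + 1 < t)
    (hs : ∀ n, n + 1 < 2*t → u (n+1) ≤ u n + 1 ∧ u n ≤ u (n+1) + 1)
    (hr : ∀ n, n < t → cw (u n) = cw (u (t+n)))
    (hb : ∀ n, n < t → u n + 3 ≤ u (t+n))
    (hA : u (i+2) ≤ u i + 1 ∧ u i ≤ u (i+2) + 1)
    (hB : i + 2 < t → (u (t+i+2) ≤ u (t+i) + 1 ∧ u (t+i) ≤ u (t+i+2) + 1)) :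
    ∃ u' : ℕ → ℕ,
      (∀ n, n + 1 < 2*(t-1) → u' (n+1) ≤ u' n + 1 ∧ u' n ≤ u' (n+1) + 1) ∧
      (∀ n, n < t-1 → cw (u' n) = cw (u' ((t-1)+n))) ∧
      (∀ n, n < t-1 → u' n + 3 ≤ u' ((t-1)+n)) := by
  refine ⟨fun n => if n < t-1 then (if n ≤ i then u n else u (n+1))
      else (if n ≤ (t-1) + i then u (n+1) else u (n+2)), ?_, ?_, ?_⟩
  · intro n hn
    simp only []
    rcases (by omega : (n+1 < t-1 ∧ n+1 ≤ i) ∨ n = i ∨ (i < n ∧ n+1 ≤ t-1) ∨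
        (t-1 ≤ n ∧ n+1 ≤ t-1+i) ∨ n = t-1+i ∨ t-1+i < n) with
      ⟨c1, c2⟩ | rfl | ⟨c1, c2⟩ | ⟨c1, c2⟩ | rfl | c1
    · rw [if_pos (by omega : n+1 < t-1), if_pos c2, if_pos (by omega : n < t-1),
        if_pos (by omega : n ≤ i)]
      exact hs n (by omega)
    · rw [if_pos (by omega : n < t-1), if_pos (le_refl n)]
      by_cases hc : n+1 < t-1
      · rw [if_pos hc, if_neg (by omega : ¬ n+1 ≤ n)]
        exact hA
      · rw [if_neg hc, if_pos (by omega : n+1 ≤ t-1+n)]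
        exact hA
    · rw [if_pos (by omega : n < t-1), if_neg (by omega : ¬ n ≤ i)]
      by_cases hc : n+1 < t-1
      · rw [if_pos hc, if_neg (by omega : ¬ n+1 ≤ i)]
        exact hs (n+1) (by omega)
      · rw [if_neg hc, if_pos (by omega : n+1 ≤ t-1+i)]
        exact hs (n+1) (by omega)
    · rw [if_neg (by omega : ¬ n < t-1), if_pos (by omega : n ≤ t-1+i),
        if_neg (by omega : ¬ n+1 < t-1), if_pos c2]
      exact hs (n+1) (by omega)
    · rw [if_neg (by omega : ¬ t-1+i < t-1), if_pos (le_refl (t-1+i)),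
        if_neg (by omega : ¬ t-1+i+1 < t-1), if_neg (by omega : ¬ t-1+i+1 ≤ t-1+i),
        show t-1+i+1 = t+i by omega, show t+i+2 = t+i+2 from rfl]
      have := hB (by omega)
      constructor
      · exact (by omega : u (t+i+2) ≤ u (t+i) + 1)
      · exact (by omega : u (t+i) ≤ u (t+i+2) + 1)
    · rw [if_neg (by omega : ¬ n < t-1), if_neg (by omega : ¬ n ≤ t-1+i),
        if_neg (by omega : ¬ n+1 < t-1), if_neg (by omega : ¬ n+1 ≤ t-1+i)]
      exact hs (n+2) (by omega)
  · intro n hn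
    simp only []
    rw [if_pos (by omega : n < t-1), if_neg (by omega : ¬ t-1+n < t-1)]
    by_cases hc : n ≤ i
    · rw [if_pos hc, if_pos (by omega : t-1+n ≤ t-1+i), show t-1+n+1 = t+n by omega]
      exact hr n (by omega)
    · rw [if_neg hc, if_neg (by omega : ¬ t-1+n ≤ t-1+i), show t-1+n+2 = t+(n+1) by omega]
      exact hr (n+1) (by omega)
  · intro n hn
    simp only []
    rw [if_pos (by omega : n < t-1), if_neg (by omega : ¬ t-1+n < t-1)]
    by_cases hc : n ≤ i
    · rw [if_pos hc, if_pos (by omega : t-1+n ≤ t-1+i), show t-1+n+1 = t+n by omega]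
      exact hb n (by omega)
    · rw [if_neg hc, if_neg (by omega : ¬ t-1+n ≤ t-1+i), show t-1+n+2 = t+(n+1) by omega]
      exact hb (n+1) (by omega)

theorem bd : ∀ t, 1 ≤ t → ∀ u : ℕ → ℕ,
    (∀ n, n + 1 < 2*t → u (n+1) ≤ u n + 1 ∧ u n ≤ u (n+1) + 1) →
    (∀ n, n < t → cw (u n) = cw (u (t+n))) →
    (∀ n, n < t → u n + 3 ≤ u (t+n)) → False := by
  intro t
  induction t using Nat.strong_induction_on with
  | _ t IH =>
  intro ht u hs hr hb
  rcases Nat.lt_or_ge t 2 with hlt | h2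
  · have ht1 : t = 1 := by omega
    subst ht1
    have e1 : u 1 ≤ u 0 + 1 := (hs 0 (by omega)).1
    have e2 : u 0 + 3 ≤ u 1 := hb 0 (by omega)
    omega
  -- t ≥ 2
  have zstep : ∀ i, i + 1 < t → u (i+1) = u i → u (t+i+1) = u (t+i) := by
    intro i hi h
    have c1 : cw (u i) = cw (u (t+i)) := hr i (by omega)
    have c2 : cw (u (i+1)) = cw (u (t+i+1)) := hr (i+1) (by omega)
    rw [h] at c2
    have hd : u (t+i+1) ≤ u (t+i) + 1 ∧ u (t+i) ≤ u (t+i+1) + 1 := hs (t+i) (by omega)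
    have := cw_d2 (u (t+i+1)) (u (t+i)) (c2.symm.trans c1)
    omega
  have zstep2 : ∀ i, i + 1 < t → u (t+i+1) = u (t+i) → u (i+1) = u i := by
    intro i hi h
    have c1 : cw (u i) = cw (u (t+i)) := hr i (by omega)
    have c2 : cw (u (i+1)) = cw (u (t+i+1)) := hr (i+1) (by omega)
    rw [h] at c2
    have hd : u (i+1) ≤ u i + 1 ∧ u i ≤ u (i+1) + 1 := hs i (by omega)
    have := cw_d2 (u (i+1)) (u i) (c2.trans c1.symm)
    omega
  have del : ∀ i, i + 1 < t →
      (u (i+2) ≤ u i + 1 ∧ u i ≤ u (i+2) + 1) →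
      (i + 2 < t → (u (t+i+2) ≤ u (t+i) + 1 ∧ u (t+i) ≤ u (t+i+2) + 1)) → False := by
    intro i hi hA hB
    obtain ⟨u', a, b, c⟩ := delred t u i hi hs hr hb hA hB
    exact IH (t-1) (by omega) (by omega) u' a b c
  have noz : ∀ i, i + 1 < t → u (i+1) ≠ u i := by
    intro i hi h
    have s2 : u (i+2) ≤ u (i+1) + 1 ∧ u (i+1) ≤ u (i+2) + 1 := hs (i+1) (by omega)
    refine del i hi (by omega) ?_
    intro hi2
    have hz2 := zstep i hi h
    have s3 : u (t+i+2) ≤ u (t+i+1) + 1 ∧ u (t+i+1) ≤ u (t+i+2) + 1 := hs (t+i+1) (by omega)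
    omega
  have noz2 : ∀ i, i + 1 < t → u (t+i+1) ≠ u (t+i) := by
    intro i hi h
    exact noz i hi (zstep2 i hi h)
  have nob : ∀ i, i + 2 < t → u (i+2) ≠ u i := by
    intro i hi h
    refine del i (by omega) (by omega) ?_
    intro hi2
    have c0 : cw (u i) = cw (u (t+i)) := hr i (by omega)
    have c2 : cw (u (i+2)) = cw (u (t+i+2)) := hr (i+2) (by omega)
    rw [h] at c2
    have s1 : u (t+i+1) ≤ u (t+i) + 1 ∧ u (t+i) ≤ u (t+i+1) + 1 := hs (t+i) (by omega)
    have s2 : u (t+i+2) ≤ u (t+i+1) + 1 ∧ u (t+i+1) ≤ u (t+i+2) + 1 := hs (t+i+1) (by omega)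
    have := cw_d2 (u (t+i)) (u (t+i+2)) (c0.symm.trans c2)
    omega
  -- first half is monotone
  have s0 : u 1 ≤ u 0 + 1 ∧ u 0 ≤ u 1 + 1 := hs 0 (by omega)
  have nz0 : u 1 ≠ u 0 := noz 0 (by omega)
  have b0 : u 0 + 3 ≤ u t := hb 0 (by omega)
  have sJ : u t ≤ u (t-1) + 1 ∧ u (t-1) ≤ u t + 1 := by
    have := hs (t-1) (by omega)
    rwa [show t-1+1 = t by omega] at this
  rcases (by omega : u 1 = u 0 + 1 ∨ u 1 + 1 = u 0) with hst | hst
  · -- increasing first half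
    have inc : ∀ i, i + 1 < t → u (i+1) = u i + 1 := by
      intro i
      induction i with
      | zero => intro _; exact hst
      | succ j ihj =>
        intro hj
        show u (j+2) = u (j+1) + 1
        have hprev := ihj (by omega)
        have s : u (j+2) ≤ u (j+1) + 1 ∧ u (j+1) ≤ u (j+2) + 1 := hs (j+1) (by omega)
        have nz : u (j+2) ≠ u (j+1) := noz (j+1) hj
        have nb : u (j+2) ≠ u j := nob j hj
        omega
    have R : ∀ i, i < t → u i = u 0 + i := by
      intro i
      induction i with
      | zero => intro _; omega
      | succ j ihj =>
        intro hj
        have := ihj (by omega)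
        have := inc j (by omega)
        omega
    have nob2 : ∀ i, i + 2 < t → u (t+i+2) ≠ u (t+i) := by
      intro i hi h
      have c0 : cw (u i) = cw (u (t+i)) := hr i (by omega)
      have c2 : cw (u (i+2)) = cw (u (t+i+2)) := hr (i+2) (by omega)
      rw [h] at c2
      have := cw_d2 (u i) (u (i+2)) (c0.trans c2.symm)
      have r1 := R i (by omega)
      have r2 := R (i+2) (by omega)
      omega
    -- second half monotone
    have s0' : u (t+1) ≤ u t + 1 ∧ u t ≤ u (t+1) + 1 := hs t (by omega)
    have nz0' : u (t+1) ≠ u t := by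
      have := noz2 0 (by omega)
      rwa [show t+0+1 = t+1 by omega, show t+0 = t by omega] at this
    rcases (by omega : u (t+1) = u t + 1 ∨ u (t+1) + 1 = u t) with hst' | hst'
    · -- inc/inc : square
      have inc2 : ∀ i, i + 1 < t → u (t+i+1) = u (t+i) + 1 := by
        intro i
        induction i with
        | zero =>
          intro _
          show u (t+0+1) = u (t+0) + 1
          rw [show t+0+1 = t+1 by omega, show t+0 = t by omega]
          exact hst'
        | succ j ihj =>
          intro hj
          show u (t+j+2) = u (t+j+1) + 1
          have hprev : u (t+j+1) = u (t+j) + 1 := ihj (by omega)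
          have s : u (t+j+2) ≤ u (t+j+1) + 1 ∧ u (t+j+1) ≤ u (t+j+2) + 1 := hs (t+j+1) (by omega)
          have nz : u (t+j+2) ≠ u (t+j+1) := by
            have := noz2 (j+1) hj
            rwa [show t+(j+1)+1 = t+j+2 by omega, show t+(j+1) = t+j+1 by omega] at this
          have nb : u (t+j+2) ≠ u (t+j) := nob2 j hj
          omega
      have R2 : ∀ i, i < t → u (t+i) = u t + i := by
        intro i
        induction i with
        | zero => intro _; rw [show t+0 = t by omega]; omega
        | succ j ihj =>
          intro hj
          have h1 := ihj (by omega)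
          have h2 := inc2 j (by omega)
          rw [show t+(j+1) = t+j+1 by omega]
          omega
      -- derive square
      have hkt : u t ≤ u 0 + t := by
        have := R (t-1) (by omega)
        omega
      apply cw_sf (u t - u 0) (u 0) (by omega)
      intro j hj
      have hjt : j < t := by omega
      have c := hr j hjt
      rw [R j hjt, R2 j hjt, show u t + j = u 0 + (u t - u 0) + j by omega] at c
      exact c
    · -- inc/dec : impossible via junction
      have dec2 : ∀ i, i + 1 < t → u (t+i+1) + 1 = u (t+i) := by
        intro i
        induction i with
        | zero =>
          intro _
          show u (t+0+1) + 1 = u (t+0)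
          rw [show t+0+1 = t+1 by omega, show t+0 = t by omega]
          exact hst'
        | succ j ihj =>
          intro hj
          show u (t+j+2) + 1 = u (t+j+1)
          have hprev : u (t+j+1) + 1 = u (t+j) := ihj (by omega)
          have s : u (t+j+2) ≤ u (t+j+1) + 1 ∧ u (t+j+1) ≤ u (t+j+2) + 1 := hs (t+j+1) (by omega)
          have nz : u (t+j+2) ≠ u (t+j+1) := by
            have := noz2 (j+1) hj
            rwa [show t+(j+1)+1 = t+j+2 by omega, show t+(j+1) = t+j+1 by omega] at this
          have nb : u (t+j+2) ≠ u (t+j) := nob2 j hj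
          omega
      have R2' : ∀ i, i < t → u (t+i) + i = u t := by
        intro i
        induction i with
        | zero => intro _; rw [show t+0 = t by omega]; omega
        | succ j ihj =>
          intro hj
          have h1 := ihj (by omega)
          have h2 := dec2 j (by omega)
          rw [show t+(j+1) = t+j+1 by omega]
          omega
      have bT : u (t-1) + 3 ≤ u (t+(t-1)) := hb (t-1) (by omega)
      have r2 : u (t+(t-1)) + (t-1) = u t := R2' (t-1) (by omega)
      have r1 : u (t-1) = u 0 + (t-1) := R (t-1) (by omega)
      omega
  · -- decreasing first half : impossible via junction
    have dec : ∀ i, i + 1 < t → u (i+1) + 1 = u i := by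
      intro i
      induction i with
      | zero => intro _; exact hst
      | succ j ihj =>
        intro hj
        show u (j+2) + 1 = u (j+1)
        have hprev := ihj (by omega)
        have s : u (j+2) ≤ u (j+1) + 1 ∧ u (j+1) ≤ u (j+2) + 1 := hs (j+1) (by omega)
        have nz : u (j+2) ≠ u (j+1) := noz (j+1) hj
        have nb : u (j+2) ≠ u j := nob j hj
        omega
    have R' : ∀ i, i < t → u i + i = u 0 := by
      intro i
      induction i with
      | zero => intro _; omega
      | succ j ihj =>
        intro hj
        have := ihj (by omega)
        have := dec j (by omega)
        omega
    have r1 : u (t-1) + (t-1) = u 0 := R' (t-1) (by omega)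
    omega

lemma bd' (t : ℕ) (u : ℕ → ℕ)
    (hs : ∀ n, n + 1 < 2*t → u (n+1) ≤ u n + 1 ∧ u n ≤ u (n+1) + 1)
    (hr : ∀ n, n < t → cw (u n) = cw (u (t+n)))
    (i0 : ℕ) (hi0 : i0 < t) (hbig : u i0 + 3 ≤ u (t+i0)) : False := by
  have tri : ∀ j, j < t → u j = u (t+j) ∨ u j + 3 ≤ u (t+j) ∨ u (t+j) + 3 ≤ u j :=
    fun j hj => cw_d2 _ _ (hr j hj)
  have stepup : ∀ j, j + 1 < t → u j + 3 ≤ u (t+j) → u (j+1) + 3 ≤ u (t+j+1) := by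
    intro j hj h
    have s1 : u (j+1) ≤ u j + 1 ∧ u j ≤ u (j+1) + 1 := hs j (by omega)
    have s2 : u (t+j+1) ≤ u (t+j) + 1 ∧ u (t+j) ≤ u (t+j+1) + 1 := hs (t+j) (by omega)
    have h3 : u (j+1) = u (t+j+1) ∨ u (j+1) + 3 ≤ u (t+j+1) ∨ u (t+j+1) + 3 ≤ u (j+1) :=
      tri (j+1) (by omega)
    omega
  have stepdn : ∀ j, j + 1 < t → u (j+1) + 3 ≤ u (t+j+1) → u j + 3 ≤ u (t+j) := by
    intro j hj h
    have s1 : u (j+1) ≤ u j + 1 ∧ u j ≤ u (j+1) + 1 := hs j (by omega)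
    have s2 : u (t+j+1) ≤ u (t+j) + 1 ∧ u (t+j) ≤ u (t+j+1) + 1 := hs (t+j) (by omega)
    have h3 := tri j (by omega)
    omega
  have up : ∀ j, i0 ≤ j → j < t → u j + 3 ≤ u (t+j) := by
    intro j hij
    induction j, hij using Nat.le_induction with
    | base => intro _; exact hbig
    | succ j hij ihj =>
      intro hj
      exact stepup j (by omega) (ihj (by omega))
  have dn : ∀ s, s ≤ i0 → u (i0 - s) + 3 ≤ u (t + (i0 - s)) := by
    intro s
    induction s with
    | zero => intro _; exact hbig
    | succ s ihs =>
      intro hss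
      have ih := ihs (by omega)
      rw [show i0 - s = (i0 - (s+1)) + 1 by omega] at ih
      exact stepdn (i0 - (s+1)) (by omega) ih
  have A : ∀ j, j < t → u j + 3 ≤ u (t+j) := by
    intro j hj
    rcases le_or_gt i0 j with h | h
    · exact up j h hj
    · have := dn (i0 - j) (by omega)
      rwa [show i0 - (i0 - j) = j by omega] at this
  exact bd t (by omega) u hs hr A

theorem stroll_nonrep (t : ℕ) (u : ℕ → ℕ)
    (hs : ∀ n, n + 1 < 2*t → u (n+1) ≤ u n + 1 ∧ u n ≤ u (n+1) + 1)
    (hr : ∀ n, n < t → cw (u n) = cw (u (t+n))) :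
    ∀ n, n < t → u n = u (t+n) := by
  intro n hn
  rcases cw_d2 _ _ (hr n hn) with h | h | h
  · exact h
  · exact absurd h (by intro hh; exact bd' t u hs hr n hn hh)
  · exfalso
    set v : ℕ → ℕ := fun j => u (2*t - 1 - j) with hv
    have hs' : ∀ j, j + 1 < 2*t → v (j+1) ≤ v j + 1 ∧ v j ≤ v (j+1) + 1 := by
      intro j hj
      simp only [hv]
      rw [show 2*t - 1 - j = (2*t - 1 - (j+1)) + 1 by omega]
      have := hs (2*t - 1 - (j+1)) (by omega)
      omega
    have hr' : ∀ j, j < t → cw (v j) = cw (v (t+j)) := by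
      intro j hj
      simp only [hv]
      rw [show 2*t - 1 - (t+j) = t - 1 - j by omega,
          show 2*t - 1 - j = t + (t - 1 - j) by omega]
      exact (hr (t-1-j) (by omega)).symm
    have hb' : v (t-1-n) + 3 ≤ v (t + (t-1-n)) := by
      simp only [hv]
      rw [show 2*t - 1 - (t-1-n) = t + n by omega,
          show 2*t - 1 - (t + (t-1-n)) = n by omega]
      exact h
    exact bd' t v hs' hr' (t-1-n) (by omega) hb'


lemma lex_adj (m p : ℕ) (x y : Fin m × Fin p) :
    (lexPathComplete m p).Adj x y ↔ ¬((x.1:ℕ) = y.1 ∧ (x.2:ℕ) = y.2) ∧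
      (((x.1:ℕ) + 1 = y.1 ∨ (y.1:ℕ) + 1 = x.1) ∨ ((x.1:ℕ) = y.1 ∧ ¬(x.2:ℕ) = y.2)) := by
  rw [lexPathComplete, SimpleGraph.fromRel_adj]
  obtain ⟨i, a⟩ := x; obtain ⟨j, b⟩ := y
  simp only [Ne, Prod.mk.injEq, not_and, Prod.ext_iff, Fin.ext_iff]
  constructor
  · rintro ⟨h1, h2⟩
    constructor
    · intro hij hab; exact h1 (by omega) (by omega)
    · rcases h2 with (h | ⟨h, h'⟩) | (h | ⟨h, h'⟩)
      · omega
      · have : ¬ (a:ℕ) = b := fun e => h' (by omega)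
        omega
      · omega
      · have : ¬ (a:ℕ) = b := fun e => h' (by omega)
        omega
  · rintro ⟨h1, h2⟩
    constructor
    · intro hij hab
      exact h1 (by omega) (by omega)
    · rcases h2 with (h | h) | ⟨h, h'⟩
      · exact Or.inl (Or.inl h)
      · exact Or.inr (Or.inl h)
      · exact Or.inl (Or.inr ⟨by omega, fun e => h' (by omega)⟩)

lemma sigma_le (m p : ℕ) (hp : 1 ≤ p) : sigmaNR (lexPathComplete m p) ≤ 4 * p := by
  apply Nat.sInf_le
  have hb : ∀ x : Fin m × Fin p, p * cw (x.1 : ℕ) + (x.2 : ℕ) < 4 * p := by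
    intro x
    have h1 : cw (x.1 : ℕ) ≤ 3 := cw_le _
    have h2 : (x.2 : ℕ) < p := x.2.isLt
    calc p * cw (x.1:ℕ) + (x.2:ℕ) < p * cw (x.1:ℕ) + p := by omega
      _ ≤ p * 3 + p := by exact Nat.add_le_add_right (Nat.mul_le_mul_left p h1) p
      _ = 4 * p := by ring
  refine ⟨fun x => ⟨p * cw (x.1 : ℕ) + (x.2 : ℕ), hb x⟩, ?_⟩
  intro t v hw hrep i hi
  have hs : ∀ n, n + 1 < 2*t → ((v (n+1)).1 : ℕ) ≤ ((v n).1 : ℕ) + 1 ∧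
      ((v n).1 : ℕ) ≤ ((v (n+1)).1 : ℕ) + 1 := by
    intro n hn
    have := (lex_adj m p _ _).1 (hw n hn)
    omega
  have key : ∀ n, n < t → cw ((v n).1 : ℕ) = cw ((v (t+n)).1 : ℕ) ∧ ((v n).2 : ℕ) = ((v (t+n)).2 : ℕ) := by
    intro n hn
    have h := hrep n hn
    have hval : p * cw ((v n).1 : ℕ) + ((v n).2 : ℕ)
        = p * cw ((v (t+n)).1 : ℕ) + ((v (t+n)).2 : ℕ) := congrArg Fin.val h
    have h1 : ((v n).2 : ℕ) < p := (v n).2.isLt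
    have h2 : ((v (t+n)).2 : ℕ) < p := (v (t+n)).2.isLt
    have e1 : cw ((v n).1 : ℕ) = cw ((v (t+n)).1 : ℕ) := by
      have d1 : (p * cw ((v n).1 : ℕ) + ((v n).2 : ℕ)) / p = cw ((v n).1 : ℕ) := by
        rw [Nat.mul_add_div (by omega), Nat.div_eq_of_lt h1, Nat.add_zero]
      have d2 : (p * cw ((v (t+n)).1 : ℕ) + ((v (t+n)).2 : ℕ)) / p = cw ((v (t+n)).1 : ℕ) := by
        rw [Nat.mul_add_div (by omega), Nat.div_eq_of_lt h2, Nat.add_zero]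
      rw [← d1, ← d2, hval]
    refine ⟨e1, ?_⟩
    rw [e1] at hval
    omega
  have hmono := stroll_nonrep t (fun n => ((v n).1 : ℕ)) hs (fun n hn => (key n hn).1)
  have e1 : ((v i).1 : ℕ) = ((v (t+i)).1 : ℕ) := hmono i hi
  have e2 := (key i hi).2
  exact Prod.ext (Fin.ext e1) (Fin.ext e2)

instance lexDec (m p : ℕ) : DecidableRel (lexPathComplete m p).Adj := fun x y =>
  decidable_of_iff _ (lex_adj m p x y).symm

def nbrLvls (m : ℕ) (i : Fin m) : Finset (Fin m) :=
  Finset.univ.filter (fun j => ((j:ℕ) = (i:ℕ)+1 ∨ (j:ℕ)+1 = (i:ℕ)))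

lemma nbrLvls_card (m : ℕ) (i : Fin m) :
    (nbrLvls m i).card = (if (i:ℕ)+1 < m then 1 else 0) + (if 0 < (i:ℕ) then 1 else 0) := by
  classical
  rw [nbrLvls, Finset.filter_or, Finset.card_union_of_disjoint]
  · congr 1
    · by_cases h : (i:ℕ)+1 < m
      · rw [if_pos h, show Finset.univ.filter (fun j : Fin m => (j:ℕ) = (i:ℕ)+1)
            = {(⟨(i:ℕ)+1, h⟩ : Fin m)} from ?_, Finset.card_singleton]
        ext j
        simp [Fin.ext_iff]
      · rw [if_neg h, Finset.card_eq_zero, Finset.filter_eq_empty_iff]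
        intro j _
        have := j.isLt
        omega
    · by_cases h : 0 < (i:ℕ)
      · rw [if_pos h, show Finset.univ.filter (fun j : Fin m => (j:ℕ)+1 = (i:ℕ))
            = {(⟨(i:ℕ)-1, by omega⟩ : Fin m)} from ?_, Finset.card_singleton]
        ext j
        simp [Fin.ext_iff]
        omega
      · rw [if_neg h, Finset.card_eq_zero, Finset.filter_eq_empty_iff]
        intro j _
        omega
  · rw [Finset.disjoint_left]
    intro j h1 h2
    simp only [Finset.mem_filter] at h1 h2
    omega

lemma nbhr (m p : ℕ) (x : Fin m × Fin p) : (lexPathComplete m p).neighborFinset x =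
    (nbrLvls m x.1) ×ˢ Finset.univ ∪ {x.1} ×ˢ (Finset.univ.erase x.2) := by
  ext y
  simp only [SimpleGraph.mem_neighborFinset, lex_adj, Finset.mem_union, Finset.mem_product,
    Finset.mem_singleton, Finset.mem_erase, Finset.mem_univ, and_true, true_and, nbrLvls,
    Finset.mem_filter, Fin.ext_iff, Ne]
  omega

lemma deg (m p : ℕ) (x : Fin m × Fin p) :
    (lexPathComplete m p).degree x = (nbrLvls m x.1).card * p + (p - 1) := by
  rw [← SimpleGraph.card_neighborFinset_eq_degree, nbhr, Finset.card_union_of_disjoint,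
    Finset.card_product, Finset.card_product, Finset.card_univ, Fintype.card_fin,
    Finset.card_singleton, Finset.card_erase_of_mem (Finset.mem_univ _), Finset.card_univ,
    Fintype.card_fin, one_mul]
  rw [Finset.disjoint_left]
  rintro ⟨j, b⟩ h1 h2
  simp only [Finset.mem_product, Finset.mem_singleton, nbrLvls, Finset.mem_filter] at h1 h2
  obtain ⟨⟨_, hj⟩, _⟩ := h1
  rw [h2.1] at hj
  omega

lemma sum_deg (m p : ℕ) :
    2 * (lexPathComplete m p).edgeFinset.card = ((m-1) * 1 + (m-1) * 1) * p * p + m * p * (p-1) := by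
  rw [← SimpleGraph.sum_degrees_eq_twice_card_edges]
  have : ∀ x : Fin m × Fin p, (lexPathComplete m p).degree x = (nbrLvls m x.1).card * p + (p - 1) :=
    deg m p
  rw [Finset.sum_congr rfl (fun x _ => this x)]
  rw [Fintype.sum_prod_type]
  simp only [Finset.sum_const, Finset.card_univ, Fintype.card_fin, smul_eq_mul]
  have h1 : ∀ i : Fin m, p * ((nbrLvls m i).card * p + (p-1))
      = (if (i:ℕ)+1 < m then p*p else 0) + ((if 0 < (i:ℕ) then p*p else 0) + p*(p-1)) := by
    intro i
    rw [nbrLvls_card]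
    split_ifs <;> ring
  rw [Finset.sum_congr rfl (fun i _ => h1 i), Finset.sum_add_distrib, Finset.sum_add_distrib,
    Finset.sum_const, Finset.card_univ, Fintype.card_fin, smul_eq_mul]
  have e1 : ∑ i : Fin m, (if (i:ℕ)+1 < m then p*p else 0) = (m-1)*(p*p) := by
    rw [Fin.sum_univ_eq_sum_range (fun i => if i+1 < m then p*p else 0) m, ← Finset.sum_filter,
      show (Finset.range m).filter (fun i => i+1 < m) = Finset.range (m-1) from by
        ext x; simp; omega,
      Finset.sum_const, Finset.card_range, smul_eq_mul]
  have e2 : ∑ i : Fin m, (if 0 < (i:ℕ) then p*p else 0) = (m-1)*(p*p) := by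
    rw [Fin.sum_univ_eq_sum_range (fun i => if 0 < i then p*p else 0) m, ← Finset.sum_filter,
      show (Finset.range m).filter (fun i => 0 < i) = Finset.Ico 1 m from by
        ext x; simp; omega,
      Finset.sum_const, Nat.card_Ico, smul_eq_mul]
  rw [e1, e2]
  ring

lemma edge_count (m p : ℕ) (hp : 1 ≤ p) (hm : 2 ≤ m) :
    ((lexPathComplete m p).edgeSet.ncard : ℚ)
      = (3 * (p : ℚ) - 1) * (Fintype.card (Fin m × Fin p) : ℚ) / 2 - (p : ℚ) ^ 2 := by
  have hE : (lexPathComplete m p).edgeSet.ncard = (lexPathComplete m p).edgeFinset.card := by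
    rw [Set.ncard_eq_toFinset_card', SimpleGraph.edgeFinset]
  have h2 := sum_deg m p
  have h3 : ((2 * (lexPathComplete m p).edgeFinset.card : ℕ) : ℚ)
      = ((((m-1) * 1 + (m-1) * 1) * p * p + m * p * (p-1) : ℕ) : ℚ) := by rw [h2]
  push_cast [Nat.cast_sub (by omega : 1 ≤ m), Nat.cast_sub (by omega : 1 ≤ p)] at h3
  rw [hE]
  have hcard : (Fintype.card (Fin m × Fin p) : ℚ) = m * p := by simp
  rw [hcard]
  linear_combination h3 / 2

lemma part2 (p : ℕ) (hp : 1 ≤ p) (N : ℕ) :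
    ∃ (W : Type) (_ : Fintype W) (G : SimpleGraph W),
      N ≤ Fintype.card W ∧ sigmaNR G ≤ 4 * p ∧
      (3 * (sigmaNR G : ℚ) - 4) * (Fintype.card W : ℚ) / 8 - (sigmaNR G : ℚ) ^ 2 / 9
        ≤ (G.edgeSet.ncard : ℚ) := by
  set m := max 3 N with hmdef
  refine ⟨Fin m × Fin p, inferInstance, lexPathComplete m p, ?_, sigma_le m p hp, ?_⟩
  · calc N ≤ m := le_max_right 3 N
      _ ≤ m * p := Nat.le_mul_of_pos_right m (by omega)
      _ = Fintype.card (Fin m × Fin p) := by simp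
  · have hE := edge_count m p hp (by omega : 2 ≤ m)
    rw [hE]
    have hcard : (Fintype.card (Fin m × Fin p) : ℚ) = m * p := by simp
    rw [hcard]
    set s : ℚ := (sigmaNR (lexPathComplete m p) : ℚ) with hsdef
    have hs4 : s ≤ 4 * p := by
      rw [hsdef]
      exact_mod_cast sigma_le m p hp
    have hs0 : 0 ≤ s := by rw [hsdef]; positivity
    have hm3 : (3:ℚ) ≤ m := by
      have : 3 ≤ m := le_max_left 3 N
      exact_mod_cast this
    have hp1 : (1:ℚ) ≤ p := by exact_mod_cast hp
    nlinarith [mul_nonneg (mul_nonneg (sub_nonneg.2 hm3) (by linarith : (0:ℚ) ≤ p))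
        (sub_nonneg.2 hs4), sq_nonneg (16 * s - 81 * (p:ℚ)), mul_self_nonneg (p:ℚ)]

/-- For `p ≥ 1` and `m ≥ 2`, the lexicographic product `G` of `P_m` with `K_p` satisfies
`σ(G) ≤ 4p` and `|E(G)| = (3p-1)|V(G)|/2 - p²`. Consequently, for all `p ≥ 1` there are
infinitely many (i.e. arbitrarily large) graphs `G` with `σ(G) ≤ 4p` and
`|E(G)| ≥ (3σ(G) - 4)|V(G)|/8 - σ(G)²/9`. -/
theorem stmt16 :
    (∀ p m : ℕ, 1 ≤ p → 2 ≤ m →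
      sigmaNR (lexPathComplete m p) ≤ 4 * p ∧
      ((lexPathComplete m p).edgeSet.ncard : ℚ)
        = (3 * (p : ℚ) - 1) * (Fintype.card (Fin m × Fin p) : ℚ) / 2 - (p : ℚ) ^ 2) ∧
    (∀ p : ℕ, 1 ≤ p → ∀ N : ℕ, ∃ (W : Type) (_ : Fintype W) (G : SimpleGraph W),
      N ≤ Fintype.card W ∧ sigmaNR G ≤ 4 * p ∧
      (3 * (sigmaNR G : ℚ) - 4) * (Fintype.card W : ℚ) / 8 - (sigmaNR G : ℚ) ^ 2 / 9
        ≤ (G.edgeSet.ncard : ℚ)) := by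
  constructor
  · intro p m hp hm
    exact ⟨sigma_le m p hp, edge_count m p hp hm⟩
  · intro p hp N
    exact part2 p hp N
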